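/- arXiv:2005.02441 — 3 statements merged into one kernel-verified Lean document; each statement's English description precedes it below -/
import Mathlib

section
/- Proposition 1, case m_B ≥ μ_B (Eq. (13)): assume m_B ≥ μ_B ≥ 1 and N_A ≥ 1. Let F₁ be the κ-μ shadowed CDF with parameters (ḡ, κ, μ, m) = (N_B·ȳ_B, κ_B, N_B·μ_B, N_B·m_B). Then for every x ≥ 0, [F₁(x)]^{N_A} = 1 + Σ_{k=1}^{N_A} (−1)^k·C(N_A,k)·Σ_{(s₁,…,s_{ν_B})∈ρ(k,ν_B)} (k!/(s₁!⋯s_{ν_B}!))·∏_{t=1}^{ν_B} [ (1/Δ₂ᴮ)^{ν_B−t}/(ν_B−t)!·Σ_{w=0}^{min(t−1,β_B)} Bᴮ_w ]^{s_t}·e^{−kx/Δ₂ᴮ}·x^{Σ_{t=1}^{ν_B}(ν_B−t)s_t}. -/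
/- κ-μ shadowed parameters and mixture coefficients (case m ≥ μ). -/

noncomputable def Δ₂ (g κ : ℝ) (μ m : ℕ) : ℝ := ((μ * κ + m) / m) * g / (μ * (1 + κ))

noncomputable def Bco (κ : ℝ) (μ m j : ℕ) : ℝ :=
  (Nat.choose (m - μ) j : ℝ) * ((m : ℝ) / (μ * κ + m)) ^ j *
    ((μ * κ) / (μ * κ + m)) ^ (m - μ - j)

/-- The κ-μ shadowed CDF in the case `m ≥ μ`. -/
noncomputable def Fcdf2 (g κ : ℝ) (μ m : ℕ) (x : ℝ) : ℝ :=
  1 - ∑ j ∈ Finset.range (m - μ + 1), Bco κ μ m j * Real.exp (-x / Δ₂ g κ μ m) *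
        ∑ r ∈ Finset.range (m - j), (x / Δ₂ g κ μ m) ^ r / (Nat.factorial r : ℝ)

/-
Writing `Δ = Δ₂ᴮ` and `ν = ν_B`, exchange the two sums in the definition of `F₁` and index the
powers of `x / Δ` by `t = ν - 1 - r`: this gives `1 - F₁(x) = ∑_{t < ν} a_t x^{ν-1-t} e^{-x/Δ}`,
where `a_t` is the coefficient in the bracket of Eq. (13) (the `B_w` collected for a fixed `r`
are those with `w ≤ min(t, β_B)`). The identity is then the binomial expansion of
`(1 - G)^{N_A}` followed by the multinomial expansion of each `G^k`.
-/

open Finset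

noncomputable def Fcdf2Coeff (g κ : ℝ) (μ ν t : ℕ) : ℝ :=
  (1 / Δ₂ g κ μ ν) ^ (ν - 1 - t) / ((ν - 1 - t).factorial : ℝ) *
    ∑ w ∈ range (min t (ν - μ) + 1), Bco κ μ ν w

lemma sum_range_sum_range_sub_comm {M : Type*} [AddCommMonoid M] (f : ℕ → ℕ → M) (μ ν : ℕ) :
    ∑ j ∈ range (ν - μ + 1), ∑ r ∈ range (ν - j), f j r =
      ∑ t : Fin ν, ∑ j ∈ range (min t.1 (ν - μ) + 1), f j (ν - 1 - t) := by
  rw [sum_comm' (t' := range ν) (s' := fun r => range (min (ν - 1 - r) (ν - μ) + 1))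
    (by intro j r; simp only [mem_range]; omega), Fin.sum_univ_eq_sum_range
    (fun t => ∑ j ∈ range (min t (ν - μ) + 1), f j (ν - 1 - t)), ← sum_range_reflect]
  refine sum_congr rfl fun r hr => ?_
  rw [show ν - 1 - (ν - 1 - r) = r by rw [mem_range] at hr; omega]

lemma Fcdf2_eq_one_sub_sum (g κ : ℝ) (μ ν : ℕ) (x : ℝ) :
    Fcdf2 g κ μ ν x = 1 - ∑ t : Fin ν,
      Fcdf2Coeff g κ μ ν t * (x ^ (ν - 1 - t.1) * Real.exp (-x / Δ₂ g κ μ ν)) := by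
  simp_rw [Fcdf2, Fcdf2Coeff, mul_sum, sum_range_sum_range_sub_comm, sum_mul]
  congr 2 with t
  refine sum_congr rfl fun j _ => ?_
  rw [div_eq_mul_one_div x, mul_pow]
  ring

lemma one_sub_pow_eq_one_add_sum {R : Type*} [CommRing R] (G : R) (n : ℕ) :
    (1 - G) ^ n = 1 + ∑ k ∈ Icc 1 n, (-1) ^ k * (n.choose k : R) * G ^ k := by
  have hrange : range (n + 1) = insert 0 (Icc 1 n) := by
    ext i
    simp only [mem_range, mem_insert, mem_Icc]
    omega
  rw [sub_eq_neg_add, add_pow, hrange, sum_insert (by simp)]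
  simp only [one_pow, mul_one, pow_zero, Nat.choose_zero_right, Nat.cast_one]
  congr 1
  refine sum_congr rfl fun k _ => ?_
  rw [neg_pow]
  ring

lemma sum_pow_eq_sum_antidiagonalTuple {K : Type*} [Field K] [CharZero K] {ν : ℕ}
    (f : Fin ν → K) (k : ℕ) :
    (∑ t, f t) ^ k = ∑ s ∈ Nat.antidiagonalTuple ν k,
      ((k.factorial : K) / ∏ t, ((s t).factorial : K)) * ∏ t, f t ^ s t := by
  rw [sum_pow_eq_sum_piAntidiag, piAntidiag_univ_fin_eq_antidiagonalTuple]
  refine sum_congr rfl fun s hs => ?_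
  have hfact : (∏ t, ((s t).factorial : K)) ≠ 0 :=
    prod_ne_zero_iff.mpr fun t _ => Nat.cast_ne_zero.mpr (Nat.factorial_ne_zero _)
  have hmultinomial : (Nat.multinomial univ s : K) = k.factorial / ∏ t, ((s t).factorial : K) := by
    rw [eq_div_iff hfact, ← Nat.cast_prod, ← Nat.cast_mul, mul_comm, Nat.multinomial_spec,
      Nat.mem_antidiagonalTuple.mp hs]
  rw [hmultinomial]

lemma prod_mul_pow_mul_pow {ι R : Type*} [CommMonoid R] (S : Finset ι) (a : ι → R)
    (e s : ι → ℕ) (x E : R) :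
    ∏ t ∈ S, (a t * (x ^ e t * E)) ^ s t =
      (∏ t ∈ S, a t ^ s t) * E ^ (∑ t ∈ S, s t) * x ^ (∑ t ∈ S, e t * s t) := by
  simp_rw [mul_pow, prod_mul_distrib, ← pow_mul, prod_pow_eq_pow_sum]
  ac_rfl

open Finset in
theorem stmt3_general (yB κB : ℝ) (μB mB NB NA : ℕ) :
    ∀ x : ℝ, 0 ≤ x →
      (Fcdf2 (NB * yB) κB (NB * μB) (NB * mB) x) ^ NA =
        1 + ∑ k ∈ Finset.Icc 1 NA, (-1 : ℝ) ^ k * (Nat.choose NA k : ℝ) *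
          ∑ s ∈ Finset.Nat.antidiagonalTuple (NB * mB) k,
            ((Nat.factorial k : ℝ) / ∏ t, (Nat.factorial (s t) : ℝ)) *
            (∏ t : Fin (NB * mB),
              ((1 / Δ₂ (NB * yB) κB (NB * μB) (NB * mB)) ^ (NB * mB - 1 - t.1) /
                  (Nat.factorial (NB * mB - 1 - t.1) : ℝ) *
                ∑ w ∈ Finset.range (min t.1 (NB * mB - NB * μB) + 1),
                  Bco κB (NB * μB) (NB * mB) w) ^ (s t)) *
            Real.exp (-(k : ℝ) * x / Δ₂ (NB * yB) κB (NB * μB) (NB * mB)) *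
            x ^ (∑ t : Fin (NB * mB), (NB * mB - 1 - t.1) * s t) := by
  intro x _
  rw [Fcdf2_eq_one_sub_sum, one_sub_pow_eq_one_add_sum]
  congr 1
  refine sum_congr rfl fun k _ => ?_
  rw [sum_pow_eq_sum_antidiagonalTuple]
  congr 1
  refine sum_congr rfl fun s hs => ?_
  rw [prod_mul_pow_mul_pow, Nat.mem_antidiagonalTuple.mp hs, ← Real.exp_nat_mul,
    mul_div_assoc', mul_neg, neg_mul]
  simp only [Fcdf2Coeff, mul_assoc]

open Finset in
/-- Proposition 1, case `m_B ≥ μ_B` (Eq. (13)): closed form for the `N_A`-th power of the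
Bob-side κ-μ shadowed CDF with parameters `(N_B ȳ_B, κ_B, N_B μ_B, N_B m_B)`.
Here `ν_B = N_B m_B`, `β_B = N_B m_B - N_B μ_B`, and `ρ(k, n)` is realized by
`Finset.Nat.antidiagonalTuple n k`. -/
theorem stmt3 (yB κB : ℝ) (μB mB NB NA : ℕ)
    (hyB : 0 < yB) (hκB : 0 < κB) (hμB : 1 ≤ μB) (hmB : μB ≤ mB)
    (hNB : 1 ≤ NB) (hNA : 1 ≤ NA) :
    ∀ x : ℝ, 0 ≤ x →
      (Fcdf2 (NB * yB) κB (NB * μB) (NB * mB) x) ^ NA =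
        1 + ∑ k ∈ Finset.Icc 1 NA, (-1 : ℝ) ^ k * (Nat.choose NA k : ℝ) *
          ∑ s ∈ Finset.Nat.antidiagonalTuple (NB * mB) k,
            ((Nat.factorial k : ℝ) / ∏ t, (Nat.factorial (s t) : ℝ)) *
            (∏ t : Fin (NB * mB),
              ((1 / Δ₂ (NB * yB) κB (NB * μB) (NB * mB)) ^ (NB * mB - 1 - t.1) /
                  (Nat.factorial (NB * mB - 1 - t.1) : ℝ) *
                ∑ w ∈ Finset.range (min t.1 (NB * mB - NB * μB) + 1),
                  Bco κB (NB * μB) (NB * mB) w) ^ (s t)) *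
            Real.exp (-(k : ℝ) * x / Δ₂ (NB * yB) κB (NB * μB) (NB * mB)) *
            x ^ (∑ t : Fin (NB * mB), (NB * mB - 1 - t.1) * s t) :=
  stmt3_general yB κB μB mB NB NA
end

section
/- Proposition 3, case m_i < μ_i (Eq. (19)): assume μ_B > m_B ≥ 1, μ_E > m_E ≥ 1, N_A ≥ 1 and τ ≥ 1. Let F_B(x) = [F₁(x)]^{N_A} with F₁ the κ-μ shadowed CDF with parameters (N_B·ȳ_B, κ_B, N_B·μ_B, N_B·m_B), and let f_E be Eve's PDF. Then ∫₀^∞ F_B(τγ + τ − 1)·f_E(γ) dγ = Σ_{k=0}^{N_A} (−1)^k·C(N_A,k)·Σ_{c=0}^{k} C(k,c)·Σ_{(s)∈ρ(k−c,η_B)} ((k−c)!/(s₁!⋯s_{η_B}!))·∏_{t=1}^{η_B} [ (1/Δ₁ᴮ)^{η_B−t}/(η_B−t)!·Σ_{w=1}^{t} Aᴮ₁_w ]^{s_t}·Σ_{(p)∈ρ(c,ν_B)} (c!/(p₁!⋯p_{ν_B}!))·∏_{q=1}^{ν_B} [ (1/Δ₂ᴮ)^{ν_B−q}/(ν_B−q)!·Σ_{w=1}^{q}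 Aᴮ₂_w ]^{p_q}·exp(−(τ−1)·((k−c)/Δ₁ᴮ + c/Δ₂ᴮ))·Σ_{b=0}^{S} C(S, b)·(τ−1)^{S−b}·τ^b·[ Σ_{j=1}^{η_E} (Aᴱ₁ⱼ/((Δ₁ᴱ)^{η_E−j+1}·(η_E−j)!))·(1+b+η_E−j−1)!·(τ(k−c)/Δ₁ᴮ + τc/Δ₂ᴮ + 1/Δ₁ᴱ)^{−(1+b+η_E−j)} + Σ_{j=1}^{ν_E} (Aᴱ₂ⱼ/((Δ₂ᴱ)^{ν_E−j+1}·(ν_E−j)!))·(1+b+ν_E−j−1)!·(τ(k−c)/Δ₁ᴮ + τc/Δ₂ᴮ + 1/Δ₂ᴱ)^{−(1+b+ν_E−j)} ], where S = Σ_{t=1}^{η_B}(η_B−t)s_t + Σ_{q=1}^{ν_B}(ν_B−q)p_q. -/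
/- κ-μ shadowed parameters and mixture coefficients (case m < μ). -/

noncomputable def Δ₁ (g κ : ℝ) (μ : ℕ) : ℝ := g / (μ * (1 + κ))

noncomputable def A1 (κ : ℝ) (μ m j : ℕ) : ℝ :=
  (-1 : ℝ) ^ m * (Nat.choose (m + j - 2) (j - 1) : ℝ) *
    ((m : ℝ) / (μ * κ + m)) ^ m * ((μ * κ) / (μ * κ + m)) ^ (-(m : ℤ) - j + 1)

noncomputable def A2 (κ : ℝ) (μ m j : ℕ) : ℝ :=
  (-1 : ℝ) ^ (j - 1) * (Nat.choose (μ - m + j - 2) (j - 1) : ℝ) *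
    ((m : ℝ) / (μ * κ + m)) ^ (j - 1) * ((μ * κ) / (μ * κ + m)) ^ ((m : ℤ) - μ - j + 1)

/-- The κ-μ shadowed CDF in the case `m < μ`. -/
noncomputable def Fcdf1 (g κ : ℝ) (μ m : ℕ) (x : ℝ) : ℝ :=
  1 - (∑ j ∈ Finset.Icc 1 (μ - m), A1 κ μ m j * Real.exp (-x / Δ₁ g κ μ) *
        ∑ r ∈ Finset.range (μ - m - j + 1), (x / Δ₁ g κ μ) ^ r / (Nat.factorial r : ℝ))
    - ∑ j ∈ Finset.Icc 1 m, A2 κ μ m j * Real.exp (-x / Δ₂ g κ μ m) *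
        ∑ r ∈ Finset.range (m - j + 1), (x / Δ₂ g κ μ m) ^ r / (Nat.factorial r : ℝ)

open MeasureTheory Finset

/-- Eve's MRC PDF in the case `m < μ` (a signed mixture of gamma densities). -/
noncomputable def fpdf1 (g κ : ℝ) (μ m : ℕ) (γ : ℝ) : ℝ :=
  (∑ j ∈ Finset.Icc 1 (μ - m), A1 κ μ m j * γ ^ (μ - m - j) * Real.exp (-γ / Δ₁ g κ μ) /
      ((Δ₁ g κ μ) ^ (μ - m - j + 1) * (Nat.factorial (μ - m - j) : ℝ)))
  + ∑ j ∈ Finset.Icc 1 m, A2 κ μ m j * γ ^ (m - j) * Real.exp (-γ / Δ₂ g κ μ m) /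
      ((Δ₂ g κ μ m) ^ (m - j + 1) * (Nat.factorial (m - j) : ℝ))

/-
Expanding `F_B ^ N_A = (1 - e^{-x/Δ₁} P₁(x) - e^{-x/Δ₂} P₂(x)) ^ N_A` by the binomial theorem
(twice) and the polynomial powers `P₁ ^ (k - c)`, `P₂ ^ c` by the multinomial theorem turns the
integrand into a finite combination of terms `e^{-ℓ x} x^S f_E(γ)` with `x = τγ + τ - 1`.
Expanding `x^S` binomially in `γ` and pulling out the constant part `e^{-ℓ(τ - 1)}` of the
exponential leaves the moments `∫₀^∞ γ^b e^{-sγ} f_E(γ) dγ`, which are gamma integrals because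
`f_E` is a signed mixture of gamma densities.
-/

open Real
open scoped Nat

theorem Δ₁_pos {g κ : ℝ} {μ : ℕ} (hg : 0 < g) (hκ : 0 ≤ κ) (hμ : 0 < μ) : 0 < Δ₁ g κ μ := by
  unfold Δ₁; positivity

theorem Δ₂_pos {g κ : ℝ} {μ m : ℕ} (hg : 0 < g) (hκ : 0 ≤ κ) (hμ : 0 < μ) (hm : 0 < m) :
    0 < Δ₂ g κ μ m := by
  unfold Δ₂; positivity

theorem sum_mul_exp_mul_sum_pow_div_factorial (η : ℕ) (d : ℝ) (a : ℕ → ℝ) (x : ℝ) :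
    ∑ j ∈ Icc 1 η, a j * exp (-x / d) * ∑ r ∈ range (η - j + 1), (x / d) ^ r / (r ! : ℝ) =
      exp (-x / d) * ∑ t : Fin η, ((1 / d) ^ (η - 1 - t.1) / ((η - 1 - t.1)! : ℝ) *
        ∑ w ∈ Icc 1 (t.1 + 1), a w) * x ^ (η - 1 - t.1) := by
  have swap : ∑ j ∈ Icc 1 η, a j * exp (-x / d) * ∑ r ∈ range (η - j + 1), (x / d) ^ r / (r ! : ℝ)
      = ∑ r ∈ range η, ∑ j ∈ Icc 1 (η - r), a j * exp (-x / d) * ((x / d) ^ r / (r ! : ℝ)) := by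
    simp_rw [mul_sum]
    exact sum_comm' fun j r => by simp only [mem_Icc, mem_range]; omega
  rw [swap, Fin.sum_univ_eq_sum_range (fun t => (1 / d) ^ (η - 1 - t) / ((η - 1 - t)! : ℝ) *
      (∑ w ∈ Icc 1 (t + 1), a w) * x ^ (η - 1 - t)), ← sum_range_reflect, mul_sum]
  refine sum_congr rfl fun r hr => ?_
  rw [mem_range] at hr
  rw [show η - (η - 1 - r) = r + 1 by omega, ← sum_mul, ← sum_mul]
  ring

theorem one_sub_sub_pow_mul {R : Type*} [CommRing R] (u v w : R) (n : ℕ) :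
    (1 - u - v) ^ n * w =
      ∑ k ∈ range (n + 1), (-1 : R) ^ k * (n.choose k : R) *
        ∑ c ∈ range (k + 1), (k.choose c : R) * (u ^ (k - c) * (v ^ c * w)) := by
  rw [show 1 - u - v = -(v + u) + 1 by ring, add_pow, sum_mul]
  refine sum_congr rfl fun k _ => ?_
  rw [neg_pow, add_pow]
  simp only [one_pow, mul_one, sum_mul, mul_sum]
  exact sum_congr rfl fun c _ => by ring

theorem sum_mul_pow_pow_eq_sum_antidiagonalTuple {K : Type*} [Field K] [CharZero K] {n : ℕ}
    (f : Fin n → K) (e : Fin n → ℕ) (x : K) (N : ℕ) :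
    (∑ t, f t * x ^ e t) ^ N =
      ∑ s ∈ Nat.antidiagonalTuple n N, ((N ! : K) / ∏ t, ((s t)! : K)) *
        (∏ t, f t ^ s t) * x ^ (∑ t, e t * s t) := by
  rw [← piAntidiag_univ_fin_eq_antidiagonalTuple, sum_pow_eq_sum_piAntidiag]
  refine sum_congr rfl fun s hs => ?_
  have multinomial_eq : (Nat.multinomial univ s : K) = (N ! : K) / ∏ t, ((s t)! : K) := by
    rw [eq_div_iff (by simp [prod_ne_zero_iff, Nat.factorial_ne_zero]), ← Nat.cast_prod,
      ← Nat.cast_mul, mul_comm, Nat.multinomial_spec, (mem_piAntidiag.mp hs).1]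
  rw [multinomial_eq, mul_assoc, ← prod_pow_eq_pow_sum, ← prod_mul_distrib]
  exact congrArg _ (prod_congr rfl fun t _ => by rw [mul_pow, pow_mul])

theorem Fcdf1_pow_mul (g κ : ℝ) (μ m N : ℕ) (x y : ℝ) :
    Fcdf1 g κ μ m x ^ N * y =
      ∑ k ∈ range (N + 1), (-1 : ℝ) ^ k * (N.choose k : ℝ) *
        ∑ c ∈ range (k + 1), (k.choose c : ℝ) *
          ∑ s ∈ Nat.antidiagonalTuple (μ - m) (k - c),
            (((k - c)! : ℝ) / ∏ t, ((s t)! : ℝ)) *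
            (∏ t : Fin (μ - m), ((1 / Δ₁ g κ μ) ^ (μ - m - 1 - t.1) / ((μ - m - 1 - t.1)! : ℝ) *
                ∑ w ∈ Icc 1 (t.1 + 1), A1 κ μ m w) ^ s t) *
            ∑ p ∈ Nat.antidiagonalTuple m c,
              ((c ! : ℝ) / ∏ q, ((p q)! : ℝ)) *
              (∏ q : Fin m, ((1 / Δ₂ g κ μ m) ^ (m - 1 - q.1) / ((m - 1 - q.1)! : ℝ) *
                  ∑ w ∈ Icc 1 (q.1 + 1), A2 κ μ m w) ^ p q) *
              (exp (-x / Δ₁ g κ μ) ^ (k - c) * exp (-x / Δ₂ g κ μ m) ^ c *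
                x ^ ((∑ t : Fin (μ - m), (μ - m - 1 - t.1) * s t) +
                  ∑ q : Fin m, (m - 1 - q.1) * p q) * y) := by
  rw [Fcdf1, sum_mul_exp_mul_sum_pow_div_factorial, sum_mul_exp_mul_sum_pow_div_factorial,
    one_sub_sub_pow_mul]
  refine sum_congr rfl fun k _ => congrArg _ (sum_congr rfl fun c _ => congrArg _ ?_)
  rw [mul_pow, mul_pow, sum_mul_pow_pow_eq_sum_antidiagonalTuple,
    sum_mul_pow_pow_eq_sum_antidiagonalTuple]
  simp only [mul_sum, sum_mul]
  rw [sum_comm]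
  exact sum_congr rfl fun s _ => sum_congr rfl fun p _ => by rw [pow_add]; ring

-- Bundling integrability with the value lets nested finite sums be integrated termwise.
def HasIntegral {α : Type*} [MeasurableSpace α] (f : α → ℝ) (μ : Measure α) (v : ℝ) : Prop :=
  Integrable f μ ∧ ∫ x, f x ∂μ = v

namespace HasIntegral

variable {α : Type*} [MeasurableSpace α] {μ : Measure α}

theorem integral_eq {f : α → ℝ} {v : ℝ} (h : HasIntegral f μ v) : ∫ x, f x ∂μ = v := h.2

theorem congr_value {f : α → ℝ} {v w : ℝ} (h : HasIntegral f μ v) (hvw : v = w) :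
    HasIntegral f μ w :=
  ⟨h.1, h.2.trans hvw⟩

theorem congr_fun {f g : α → ℝ} {v : ℝ} (h : HasIntegral f μ v) (hfg : ∀ x, f x = g x) :
    HasIntegral g μ v :=
  funext hfg ▸ h

theorem const_mul {f : α → ℝ} {v : ℝ} (h : HasIntegral f μ v) (c : ℝ) :
    HasIntegral (fun x => c * f x) μ (c * v) :=
  ⟨h.1.const_mul c, by rw [integral_const_mul, h.2]⟩

theorem add {f g : α → ℝ} {v w : ℝ} (hf : HasIntegral f μ v) (hg : HasIntegral g μ w) :
    HasIntegral (fun x => f x + g x) μ (v + w) :=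
  ⟨hf.1.add hg.1, by rw [integral_add hf.1 hg.1, hf.2, hg.2]⟩

theorem sum {ι : Type*} {s : Finset ι} {f : ι → α → ℝ} {v : ι → ℝ}
    (h : ∀ i ∈ s, HasIntegral (f i) μ (v i)) :
    HasIntegral (fun x => ∑ i ∈ s, f i x) μ (∑ i ∈ s, v i) :=
  ⟨integrable_finsetSum s fun i hi => (h i hi).1, by
    rw [integral_finsetSum s fun i hi => (h i hi).1]
    exact sum_congr rfl fun i hi => (h i hi).2⟩

end HasIntegral

theorem hasIntegral_pow_mul_exp_neg_mul (n : ℕ) {a : ℝ} (ha : 0 < a) :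
    HasIntegral (fun t => t ^ n * exp (-(a * t))) (volume.restrict (Set.Ioi 0))
      ((n ! : ℝ) / a ^ (n + 1)) := by
  refine ⟨IntegrableOn.integrable ?_, ?_⟩
  · simpa only [rpow_one, rpow_natCast, neg_mul] using
      integrableOn_rpow_mul_exp_neg_mul_rpow (p := 1) (s := n) (b := a)
        (neg_one_lt_zero.trans_le n.cast_nonneg) one_pos ha
  · have h := integral_rpow_mul_exp_neg_mul_Ioi (a := (n : ℝ) + 1) (by positivity) ha
    simp only [add_sub_cancel_right, rpow_natCast] at h
    rw [h, Gamma_nat_eq_factorial, ← Nat.cast_succ, rpow_natCast, one_div, inv_pow,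
      inv_mul_eq_div]

noncomputable def fpdf1LaplaceMoment (g κ : ℝ) (μ m : ℕ) (s : ℝ) (n : ℕ) : ℝ :=
  (∑ j ∈ Icc 1 (μ - m), A1 κ μ m j / (Δ₁ g κ μ ^ (μ - m - j + 1) * ((μ - m - j)! : ℝ)) *
      ((n + (μ - m - j))! : ℝ) / (s + 1 / Δ₁ g κ μ) ^ (1 + n + (μ - m - j)))
  + ∑ j ∈ Icc 1 m, A2 κ μ m j / (Δ₂ g κ μ m ^ (m - j + 1) * ((m - j)! : ℝ)) *
      ((n + (m - j))! : ℝ) / (s + 1 / Δ₂ g κ μ m) ^ (1 + n + (m - j))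

theorem pow_mul_exp_mul_fpdf1 (g κ : ℝ) (μ m : ℕ) (s γ : ℝ) (n : ℕ) :
    γ ^ n * exp (-(s * γ)) * fpdf1 g κ μ m γ =
      (∑ j ∈ Icc 1 (μ - m), A1 κ μ m j / (Δ₁ g κ μ ^ (μ - m - j + 1) * ((μ - m - j)! : ℝ)) *
          (γ ^ (n + (μ - m - j)) * exp (-((s + 1 / Δ₁ g κ μ) * γ))))
      + ∑ j ∈ Icc 1 m, A2 κ μ m j / (Δ₂ g κ μ m ^ (m - j + 1) * ((m - j)! : ℝ)) *
          (γ ^ (n + (m - j)) * exp (-((s + 1 / Δ₂ g κ μ m) * γ))) := by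
  have exp_tilt (d : ℝ) : exp (-((s + 1 / d) * γ)) = exp (-(s * γ)) * exp (-γ / d) := by
    rw [← exp_add]; ring_nf
  simp only [fpdf1, mul_add, mul_sum, exp_tilt, pow_add]
  congr 1 <;> exact sum_congr rfl fun j _ => by ring

theorem hasIntegral_pow_mul_exp_mul_fpdf1 {g κ : ℝ} {μ m : ℕ} (hΔ₁ : 0 < Δ₁ g κ μ)
    (hΔ₂ : 0 < Δ₂ g κ μ m) {s : ℝ} (hs : 0 ≤ s) (n : ℕ) :
    HasIntegral (fun γ => γ ^ n * exp (-(s * γ)) * fpdf1 g κ μ m γ)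
      (volume.restrict (Set.Ioi 0)) (fpdf1LaplaceMoment g κ μ m s n) := by
  simp only [pow_mul_exp_mul_fpdf1]
  refine .congr_value
    (.add (.sum fun j _ => .const_mul (hasIntegral_pow_mul_exp_neg_mul _ (by positivity)) _)
      (.sum fun j _ => .const_mul (hasIntegral_pow_mul_exp_neg_mul _ (by positivity)) _)) ?_
  unfold fpdf1LaplaceMoment
  congr 1 <;> exact sum_congr rfl fun j _ => by rw [add_comm 1 n, add_right_comm n 1]; ring

theorem hasIntegral_exp_mul_pow_mul_fpdf1 {g κ : ℝ} {μ m : ℕ} (hΔ₁ : 0 < Δ₁ g κ μ)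
    (hΔ₂ : 0 < Δ₂ g κ μ m) {d₁ d₂ τ : ℝ} (hd₁ : 0 ≤ d₁) (hd₂ : 0 ≤ d₂) (hτ : 0 ≤ τ)
    (u v S : ℕ) :
    HasIntegral (fun γ => exp (-(τ * γ + τ - 1) / d₁) ^ u * exp (-(τ * γ + τ - 1) / d₂) ^ v *
        (τ * γ + τ - 1) ^ S * fpdf1 g κ μ m γ) (volume.restrict (Set.Ioi 0))
      (exp (-(τ - 1) * ((u : ℝ) / d₁ + (v : ℝ) / d₂)) *
        ∑ b ∈ range (S + 1), (S.choose b : ℝ) * (τ - 1) ^ (S - b) * τ ^ b *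
          fpdf1LaplaceMoment g κ μ m (τ * u / d₁ + τ * v / d₂) b) := by
  refine .congr_fun (.const_mul (.sum fun b _ =>
    .const_mul (hasIntegral_pow_mul_exp_mul_fpdf1 hΔ₁ hΔ₂ (by positivity) b) _) _) fun γ => ?_
  have exp_split : exp (-(τ * γ + τ - 1) / d₁) ^ u * exp (-(τ * γ + τ - 1) / d₂) ^ v =
      exp (-(τ - 1) * ((u : ℝ) / d₁ + (v : ℝ) / d₂)) *
        exp (-((τ * u / d₁ + τ * v / d₂) * γ)) := by
    rw [← exp_nat_mul, ← exp_nat_mul, ← exp_add, ← exp_add]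
    ring_nf
  rw [exp_split, show τ * γ + τ - 1 = τ * γ + (τ - 1) by ring, add_pow]
  simp only [mul_sum, sum_mul]
  exact sum_congr rfl fun b _ => by ring

open Finset in
theorem stmt8_general (yB κB yE κE : ℝ) (μB mB NB μE mE NE NA : ℕ) (τ : ℝ)
    (hyB : 0 < yB) (hκB : 0 < κB) (hyE : 0 < yE) (hκE : 0 < κE)
    (hmB : 1 ≤ mB) (hμB : mB < μB) (hmE : 1 ≤ mE) (hμE : mE < μE)
    (hNB : 1 ≤ NB) (hNE : 1 ≤ NE) (hτ : 1 ≤ τ) :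
    (∫ γ in Set.Ioi (0 : ℝ),
        (Fcdf1 (NB * yB) κB (NB * μB) (NB * mB) (τ * γ + τ - 1)) ^ NA *
          fpdf1 (NE * yE) κE (NE * μE) (NE * mE) γ) =
      ∑ k ∈ Finset.range (NA + 1), (-1 : ℝ) ^ k * (Nat.choose NA k : ℝ) *
        ∑ c ∈ Finset.range (k + 1), (Nat.choose k c : ℝ) *
          ∑ s ∈ Finset.Nat.antidiagonalTuple (NB * μB - NB * mB) (k - c),
            ((Nat.factorial (k - c) : ℝ) / ∏ t, (Nat.factorial (s t) : ℝ)) *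
            (∏ t : Fin (NB * μB - NB * mB),
              ((1 / Δ₁ (NB * yB) κB (NB * μB)) ^ (NB * μB - NB * mB - 1 - t.1) /
                  (Nat.factorial (NB * μB - NB * mB - 1 - t.1) : ℝ) *
                ∑ w ∈ Finset.Icc 1 (t.1 + 1), A1 κB (NB * μB) (NB * mB) w) ^ (s t)) *
            ∑ p ∈ Finset.Nat.antidiagonalTuple (NB * mB) c,
              ((Nat.factorial c : ℝ) / ∏ q, (Nat.factorial (p q) : ℝ)) *
              (∏ q : Fin (NB * mB),
                ((1 / Δ₂ (NB * yB) κB (NB * μB) (NB * mB)) ^ (NB * mB - 1 - q.1) /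
                    (Nat.factorial (NB * mB - 1 - q.1) : ℝ) *
                  ∑ w ∈ Finset.Icc 1 (q.1 + 1), A2 κB (NB * μB) (NB * mB) w) ^ (p q)) *
              Real.exp (-(τ - 1) * (((k - c : ℕ) : ℝ) / Δ₁ (NB * yB) κB (NB * μB)
                  + (c : ℝ) / Δ₂ (NB * yB) κB (NB * μB) (NB * mB))) *
              ∑ b ∈ Finset.range (((∑ t : Fin (NB * μB - NB * mB),
                    (NB * μB - NB * mB - 1 - t.1) * s t)
                  + (∑ q : Fin (NB * mB), (NB * mB - 1 - q.1) * p q)) + 1),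
                (Nat.choose ((∑ t : Fin (NB * μB - NB * mB),
                      (NB * μB - NB * mB - 1 - t.1) * s t)
                    + (∑ q : Fin (NB * mB), (NB * mB - 1 - q.1) * p q)) b : ℝ) *
                (τ - 1) ^ (((∑ t : Fin (NB * μB - NB * mB),
                      (NB * μB - NB * mB - 1 - t.1) * s t)
                    + (∑ q : Fin (NB * mB), (NB * mB - 1 - q.1) * p q)) - b) * τ ^ b *
                ((∑ j ∈ Finset.Icc 1 (NE * μE - NE * mE),
                    A1 κE (NE * μE) (NE * mE) j /
                      ((Δ₁ (NE * yE) κE (NE * μE)) ^ (NE * μE - NE * mE - j + 1) *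
                        (Nat.factorial (NE * μE - NE * mE - j) : ℝ)) *
                    (Nat.factorial (b + (NE * μE - NE * mE - j)) : ℝ) /
                    (τ * ((k - c : ℕ) : ℝ) / Δ₁ (NB * yB) κB (NB * μB)
                        + τ * (c : ℝ) / Δ₂ (NB * yB) κB (NB * μB) (NB * mB)
                        + 1 / Δ₁ (NE * yE) κE (NE * μE)) ^
                      (1 + b + (NE * μE - NE * mE - j)))
                  + ∑ j ∈ Finset.Icc 1 (NE * mE),
                    A2 κE (NE * μE) (NE * mE) j /
                      ((Δ₂ (NE * yE) κE (NE * μE) (NE * mE)) ^ (NE * mE - j + 1) *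
                        (Nat.factorial (NE * mE - j) : ℝ)) *
                    (Nat.factorial (b + (NE * mE - j)) : ℝ) /
                    (τ * ((k - c : ℕ) : ℝ) / Δ₁ (NB * yB) κB (NB * μB)
                        + τ * (c : ℝ) / Δ₂ (NB * yB) κB (NB * μB) (NB * mB)
                        + 1 / Δ₂ (NE * yE) κE (NE * μE) (NE * mE)) ^
                      (1 + b + (NE * mE - j))) := by
  have hgB : 0 < (NB : ℝ) * yB := mul_pos (Nat.cast_pos.mpr hNB) hyB
  have hgE : 0 < (NE : ℝ) * yE := mul_pos (Nat.cast_pos.mpr hNE) hyE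
  have hΔ₁B : 0 < Δ₁ (NB * yB) κB (NB * μB) := Δ₁_pos hgB hκB.le (Nat.mul_pos hNB (by omega))
  have hΔ₂B : 0 < Δ₂ (NB * yB) κB (NB * μB) (NB * mB) :=
    Δ₂_pos hgB hκB.le (Nat.mul_pos hNB (by omega)) (Nat.mul_pos hNB hmB)
  have hΔ₁E : 0 < Δ₁ (NE * yE) κE (NE * μE) := Δ₁_pos hgE hκE.le (Nat.mul_pos hNE (by omega))
  have hΔ₂E : 0 < Δ₂ (NE * yE) κE (NE * μE) (NE * mE) :=
    Δ₂_pos hgE hκE.le (Nat.mul_pos hNE (by omega)) (Nat.mul_pos hNE hmE)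
  simp only [Fcdf1_pow_mul]
  refine HasIntegral.integral_eq (.congr_value (.sum fun k _ => .const_mul (.sum fun c _ =>
    .const_mul (.sum fun s _ => .const_mul (.sum fun p _ => .const_mul
      (hasIntegral_exp_mul_pow_mul_fpdf1 hΔ₁E hΔ₂E hΔ₁B.le hΔ₂B.le (by linarith) _ _ _) _) _) _) _)
    ?_)
  -- the two sides differ only in how the coefficient products are associated
  simp only [fpdf1LaplaceMoment, mul_assoc]

open Finset in
/-- Proposition 3, case `m_i < μ_i` (Eq. (19)): closed form of the secrecy outage probability
`∫₀^∞ F_B(τγ + τ − 1) f_E(γ) dγ` for the TAS/MRC MIMO κ-μ shadowed wiretap channel. -/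
theorem stmt8 (yB κB yE κE : ℝ) (μB mB NB μE mE NE NA : ℕ) (τ : ℝ)
    (hyB : 0 < yB) (hκB : 0 < κB) (hyE : 0 < yE) (hκE : 0 < κE)
    (hmB : 1 ≤ mB) (hμB : mB < μB) (hmE : 1 ≤ mE) (hμE : mE < μE)
    (hNB : 1 ≤ NB) (hNE : 1 ≤ NE) (hNA : 1 ≤ NA) (hτ : 1 ≤ τ) :
    (∫ γ in Set.Ioi (0 : ℝ),
        (Fcdf1 (NB * yB) κB (NB * μB) (NB * mB) (τ * γ + τ - 1)) ^ NA *
          fpdf1 (NE * yE) κE (NE * μE) (NE * mE) γ) =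
      ∑ k ∈ Finset.range (NA + 1), (-1 : ℝ) ^ k * (Nat.choose NA k : ℝ) *
        ∑ c ∈ Finset.range (k + 1), (Nat.choose k c : ℝ) *
          ∑ s ∈ Finset.Nat.antidiagonalTuple (NB * μB - NB * mB) (k - c),
            ((Nat.factorial (k - c) : ℝ) / ∏ t, (Nat.factorial (s t) : ℝ)) *
            (∏ t : Fin (NB * μB - NB * mB),
              ((1 / Δ₁ (NB * yB) κB (NB * μB)) ^ (NB * μB - NB * mB - 1 - t.1) /
                  (Nat.factorial (NB * μB - NB * mB - 1 - t.1) : ℝ) *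
                ∑ w ∈ Finset.Icc 1 (t.1 + 1), A1 κB (NB * μB) (NB * mB) w) ^ (s t)) *
            ∑ p ∈ Finset.Nat.antidiagonalTuple (NB * mB) c,
              ((Nat.factorial c : ℝ) / ∏ q, (Nat.factorial (p q) : ℝ)) *
              (∏ q : Fin (NB * mB),
                ((1 / Δ₂ (NB * yB) κB (NB * μB) (NB * mB)) ^ (NB * mB - 1 - q.1) /
                    (Nat.factorial (NB * mB - 1 - q.1) : ℝ) *
                  ∑ w ∈ Finset.Icc 1 (q.1 + 1), A2 κB (NB * μB) (NB * mB) w) ^ (p q)) *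
              Real.exp (-(τ - 1) * (((k - c : ℕ) : ℝ) / Δ₁ (NB * yB) κB (NB * μB)
                  + (c : ℝ) / Δ₂ (NB * yB) κB (NB * μB) (NB * mB))) *
              ∑ b ∈ Finset.range (((∑ t : Fin (NB * μB - NB * mB),
                    (NB * μB - NB * mB - 1 - t.1) * s t)
                  + (∑ q : Fin (NB * mB), (NB * mB - 1 - q.1) * p q)) + 1),
                (Nat.choose ((∑ t : Fin (NB * μB - NB * mB),
                      (NB * μB - NB * mB - 1 - t.1) * s t)
                    + (∑ q : Fin (NB * mB), (NB * mB - 1 - q.1) * p q)) b : ℝ) *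
                (τ - 1) ^ (((∑ t : Fin (NB * μB - NB * mB),
                      (NB * μB - NB * mB - 1 - t.1) * s t)
                    + (∑ q : Fin (NB * mB), (NB * mB - 1 - q.1) * p q)) - b) * τ ^ b *
                ((∑ j ∈ Finset.Icc 1 (NE * μE - NE * mE),
                    A1 κE (NE * μE) (NE * mE) j /
                      ((Δ₁ (NE * yE) κE (NE * μE)) ^ (NE * μE - NE * mE - j + 1) *
                        (Nat.factorial (NE * μE - NE * mE - j) : ℝ)) *
                    (Nat.factorial (b + (NE * μE - NE * mE - j)) : ℝ) /
                    (τ * ((k - c : ℕ) : ℝ) / Δ₁ (NB * yB) κB (NB * μB)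
                        + τ * (c : ℝ) / Δ₂ (NB * yB) κB (NB * μB) (NB * mB)
                        + 1 / Δ₁ (NE * yE) κE (NE * μE)) ^
                      (1 + b + (NE * μE - NE * mE - j)))
                  + ∑ j ∈ Finset.Icc 1 (NE * mE),
                    A2 κE (NE * μE) (NE * mE) j /
                      ((Δ₂ (NE * yE) κE (NE * μE) (NE * mE)) ^ (NE * mE - j + 1) *
                        (Nat.factorial (NE * mE - j) : ℝ)) *
                    (Nat.factorial (b + (NE * mE - j)) : ℝ) /
                    (τ * ((k - c : ℕ) : ℝ) / Δ₁ (NB * yB) κB (NB * μB)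
                        + τ * (c : ℝ) / Δ₂ (NB * yB) κB (NB * μB) (NB * mB)
                        + 1 / Δ₂ (NE * yE) κE (NE * μE) (NE * mE)) ^
                      (1 + b + (NE * mE - j))) :=
  stmt8_general yB κB yE κE μB mB NB μE mE NE NA τ hyB hκB hyE hκE hmB hμB hmE hμE hNB hNE hτ
end

section
/- Closed-form average capacity of a κ-μ shadowed channel, case m < μ (evaluation of C̄_E in Appendix E, Eq. (E.1)): assume μ > m ≥ 1 and let F be the κ-μ shadowed CDF. Then (1/ln 2)·∫₀^∞ (1 − F(γ))/(1+γ) dγ = (1/ln 2)·( e^{1/Δ₁}·Σ_{j=1}^{μ−m} A₁ⱼ·Σ_{r=0}^{μ−m−j} (1/Δ₁)^r·Γᵤ(−r, 1/Δ₁) + e^{1/Δ₂}·Σ_{j=1}^{m} A₂ⱼ·Σ_{r=0}^{m−j} (1/Δ₂)^r·Γᵤ(−r, 1/Δ₂) ). -/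
open MeasureTheory in
/-- The (generalized) upper incomplete gamma function `Γᵤ(a, x) = ∫_x^∞ t^{a−1} e^{−t} dt`,
convergent for every real `a` when `x > 0`. -/
noncomputable def Gammau (a x : ℝ) : ℝ := ∫ t in Set.Ioi x, t ^ (a - 1) * Real.exp (-t)

/-!
After division by `1 + γ`, `1 - F` is a finite combination of terms `(γ/Δ)^r e^{-γ/Δ}/(1+γ)`.
The substitution `u = (1 + γ)/Δ` turns each of them into `e^{a} ∫_a^∞ (u - a)^r e^{-u}/u du`
with `a = 1/Δ`. Splitting `(u - a)^{r+1}/u = (u - a)^r - a (u - a)^r/u` gives a recursion in `r`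
which is the recurrence `Γᵤ(s + 1, a) = s Γᵤ(s, a) + a^s e^{-a}` at `s = -(r + 1)`, so the
integral equals `r! a^r Γᵤ(-r, a)`.
-/

open MeasureTheory Set Filter Topology Real Asymptotics
open scoped Nat

lemma integrableOn_Ioi_of_tendsto_mul_exp {f : ℝ → ℝ} {a b : ℝ} (hb : 0 < b)
    (hf : ContinuousOn f (Ici a)) (hlim : Tendsto (fun x => f x * exp (b * x)) atTop (𝓝 0)) :
    IntegrableOn f (Ioi a) := by
  refine integrable_of_isBigO_exp_neg hb hf ?_
  have h := (hlim.isBigO_one ℝ).mul (isBigO_refl (fun x => exp (-b * x)) atTop)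
  refine (h.congr_left fun x => ?_).congr_right fun x => one_mul _
  rw [mul_assoc, ← exp_add, neg_mul, add_neg_cancel, exp_zero, mul_one]

lemma integrableOn_rpow_mul_exp_neg {a : ℝ} (ha : 0 < a) (s : ℝ) :
    IntegrableOn (fun t => t ^ s * exp (-t)) (Ioi a) := by
  refine integrableOn_Ioi_of_tendsto_mul_exp one_half_pos
    ((continuousOn_id.rpow_const fun t ht => Or.inl (ha.trans_le ht).ne').mul
      (continuous_exp.comp continuous_neg).continuousOn) ?_
  refine (tendsto_rpow_mul_exp_neg_mul_atTop_nhds_zero s _ one_half_pos).congr fun t => ?_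
  rw [mul_assoc, ← exp_add]
  ring_nf

theorem Gammau_add_one (s : ℝ) {a : ℝ} (ha : 0 < a) :
    Gammau (s + 1) a = s * Gammau s a + a ^ s * exp (-a) := by
  have hderiv : ∀ t ∈ Ici a, HasDerivAt (fun t => -(t ^ s * exp (-t)))
      (t ^ s * exp (-t) - s * (t ^ (s - 1) * exp (-t))) t := by
    intro t ht
    have hpow := hasDerivAt_rpow_const (p := s) (Or.inl (ha.trans_le ht).ne')
    have hexp : HasDerivAt (fun t => exp (-t)) (-exp (-t)) t := by
      simpa using (hasDerivAt_neg t).exp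
    exact (hpow.mul hexp).neg.congr_deriv (by ring)
  have hs := integrableOn_rpow_mul_exp_neg ha s
  have hs' := (integrableOn_rpow_mul_exp_neg ha (s - 1)).const_mul s
  have hlim : Tendsto (fun t => -(t ^ s * exp (-t))) atTop (𝓝 0) := by
    simpa using (tendsto_rpow_mul_exp_neg_mul_atTop_nhds_zero s 1 one_pos).neg
  have hftc := integral_Ioi_of_hasDerivAt_of_tendsto' hderiv (hs.sub hs') hlim
  rw [integral_sub hs hs', integral_const_mul] at hftc
  rw [Gammau, Gammau, add_sub_cancel_right]
  linarith

lemma tendsto_sub_pow_mul_exp_neg_mul (a : ℝ) (r : ℕ) {b : ℝ} (hb : 0 < b) :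
    Tendsto (fun x => (x - a) ^ r * exp (-b * x)) atTop (𝓝 0) := by
  have h := ((tendsto_rpow_mul_exp_neg_mul_atTop_nhds_zero r b hb).comp
    (tendsto_atTop_add_const_right _ (-a) tendsto_id)).const_mul (exp (-b * a))
  rw [mul_zero] at h
  refine h.congr fun x => ?_
  simp only [Function.comp_apply, id, rpow_natCast, ← sub_eq_add_neg]
  rw [mul_left_comm, ← exp_add]
  ring_nf

lemma integrableOn_sub_pow_mul_exp_neg (a : ℝ) (r : ℕ) :
    IntegrableOn (fun u => (u - a) ^ r * exp (-u)) (Ioi a) := by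
  refine integrableOn_Ioi_of_tendsto_mul_exp one_half_pos (by fun_prop) ?_
  refine (tendsto_sub_pow_mul_exp_neg_mul a r one_half_pos).congr fun u => ?_
  rw [mul_assoc, ← exp_add]
  ring_nf

lemma integrableOn_sub_pow_mul_exp_neg_div {a : ℝ} (ha : 0 < a) (r : ℕ) :
    IntegrableOn (fun u => (u - a) ^ r * exp (-u) / u) (Ioi a) := by
  refine integrableOn_Ioi_of_tendsto_mul_exp one_half_pos
    (ContinuousOn.div (by fun_prop) continuousOn_id fun u hu => (ha.trans_le hu).ne') ?_
  have h := (tendsto_sub_pow_mul_exp_neg_mul a r one_half_pos).mul tendsto_inv_atTop_zero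
  rw [mul_zero] at h
  refine h.congr fun u => ?_
  rw [show -(1 / 2) * u = -u + 1 / 2 * u by ring, exp_add]
  ring

theorem integral_Ioi_comp_add_right {E : Type*} [NormedAddCommGroup E] [NormedSpace ℝ E]
    (f : ℝ → E) (c d : ℝ) :
    ∫ x in Ioi c, f (x + d) = ∫ y in Ioi (c + d), f y := by
  have h := (measurePreserving_add_right volume d).setIntegral_preimage_emb
    (measurableEmbedding_addRight d) f (Ioi (c + d))
  rwa [preimage_add_const_Ioi, add_sub_cancel_right] at h

theorem integral_Ioi_comp_mul_add {E : Type*} [NormedAddCommGroup E] [NormedSpace ℝ E]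
    (g : ℝ → E) (a d : ℝ) {c : ℝ} (hc : 0 < c) :
    ∫ x in Ioi a, g (c * x + d) = c⁻¹ • ∫ u in Ioi (c * a + d), g u := by
  have h := integral_Ioi_comp_add_right (fun y => g (c * y)) a (d / c)
  simp only [mul_add, mul_div_cancel₀ d hc.ne'] at h
  rw [h, integral_comp_mul_left_Ioi g _ hc, mul_add, mul_div_cancel₀ d hc.ne']

theorem integrableOn_Ioi_comp_mul_add_iff {E : Type*} [NormedAddCommGroup E]
    (g : ℝ → E) (a d : ℝ) {c : ℝ} (hc : 0 < c) :
    IntegrableOn (fun x => g (c * x + d)) (Ioi a) ↔ IntegrableOn g (Ioi (c * a + d)) := by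
  have h := (measurePreserving_add_right volume (d / c)).integrableOn_comp_preimage
    (measurableEmbedding_addRight (d / c)) (f := fun y => g (c * y)) (s := Ioi (a + d / c))
  rw [preimage_add_const_Ioi, add_sub_cancel_right, integrableOn_Ioi_comp_mul_left_iff g _ hc,
    mul_add, mul_div_cancel₀ d hc.ne'] at h
  rw [← h]
  simp only [Function.comp_def, mul_add, mul_div_cancel₀ d hc.ne']

theorem integral_Ioi_sub_pow_mul_exp_neg (a : ℝ) (r : ℕ) :
    ∫ u in Ioi a, (u - a) ^ r * exp (-u) = r ! * exp (-a) := by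
  have h := integral_Ioi_comp_add_right (fun u => (u - a) ^ r * exp (-u)) 0 a
  rw [zero_add] at h
  rw [← h, ← Gamma_nat_eq_factorial, Gamma_eq_integral (by positivity), ← integral_mul_const]
  refine setIntegral_congr_fun measurableSet_Ioi fun x _ => ?_
  simp only [add_sub_cancel_right, rpow_natCast, neg_add, exp_add]
  ring

theorem integral_Ioi_sub_pow_mul_exp_neg_div {a : ℝ} (ha : 0 < a) (r : ℕ) :
    ∫ u in Ioi a, (u - a) ^ r * exp (-u) / u = r ! * a ^ r * Gammau (-r) a := by
  induction r with
  | zero =>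
    simp only [pow_zero, mul_one, one_mul, Nat.factorial_zero, Nat.cast_one, CharP.cast_eq_zero,
      neg_zero, Gammau, zero_sub, rpow_neg_one, div_eq_mul_inv, mul_comm]
  | succ r ih =>
    have hsplit : ∀ u ∈ Ioi a, (u - a) ^ (r + 1) * exp (-u) / u
        = (u - a) ^ r * exp (-u) - a * ((u - a) ^ r * exp (-u) / u) := by
      intro u hu
      field_simp [(ha.trans hu).ne']
      ring
    have hrec := Gammau_add_one (-(r + 1)) ha
    have hpow : a ^ ((r : ℝ) + 1) = a ^ (r + 1) := by exact_mod_cast rpow_natCast a (r + 1)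
    rw [show -((r : ℝ) + 1) + 1 = -r by ring, rpow_neg ha.le, hpow] at hrec
    rw [setIntegral_congr_fun measurableSet_Ioi hsplit,
      integral_sub (integrableOn_sub_pow_mul_exp_neg a r)
        ((integrableOn_sub_pow_mul_exp_neg_div ha r).const_mul a),
      integral_const_mul, integral_Ioi_sub_pow_mul_exp_neg, ih, hrec, Nat.factorial_succ]
    push_cast
    field_simp
    ring

section ErlangMixture

variable {Δ : ℝ}

lemma div_pow_mul_exp_neg_div_div_one_add_eq (hΔ : 0 < Δ) (r : ℕ) (γ : ℝ) :
    (γ / Δ) ^ r * exp (-γ / Δ) / (1 + γ) =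
      exp (1 / Δ) / Δ * ((1 / Δ * γ + 1 / Δ - 1 / Δ) ^ r * exp (-(1 / Δ * γ + 1 / Δ)) /
        (1 / Δ * γ + 1 / Δ)) := by
  rw [show 1 / Δ * γ + 1 / Δ = (1 + γ) / Δ by ring, show (1 + γ) / Δ - 1 / Δ = γ / Δ by ring,
    show -((1 + γ) / Δ) = -γ / Δ + -(1 / Δ) by ring, exp_add, exp_neg]
  field_simp [hΔ.ne']

lemma integrableOn_div_pow_mul_exp_neg_div_div_one_add (hΔ : 0 < Δ) (r : ℕ) :
    IntegrableOn (fun γ => (γ / Δ) ^ r * exp (-γ / Δ) / (1 + γ)) (Ioi 0) := by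
  have h := (integrableOn_Ioi_comp_mul_add_iff (fun u => (u - 1 / Δ) ^ r * exp (-u) / u) 0
    (1 / Δ) (one_div_pos.2 hΔ)).2 (by
      rw [mul_zero, zero_add]
      exact integrableOn_sub_pow_mul_exp_neg_div (one_div_pos.2 hΔ) r)
  rw [funext (div_pow_mul_exp_neg_div_div_one_add_eq hΔ r)]
  exact h.const_mul _

theorem integral_div_pow_mul_exp_neg_div_div_one_add (hΔ : 0 < Δ) (r : ℕ) :
    ∫ γ in Ioi 0, (γ / Δ) ^ r * exp (-γ / Δ) / (1 + γ) =
      exp (1 / Δ) * (r ! * (1 / Δ) ^ r * Gammau (-r) (1 / Δ)) := by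
  simp only [div_pow_mul_exp_neg_div_div_one_add_eq hΔ r]
  rw [integral_const_mul, integral_Ioi_comp_mul_add (fun u => (u - 1 / Δ) ^ r * exp (-u) / u) 0
    (1 / Δ) (one_div_pos.2 hΔ), mul_zero, zero_add,
    integral_Ioi_sub_pow_mul_exp_neg_div (one_div_pos.2 hΔ), smul_eq_mul]
  field_simp

variable (s : Finset ℕ) (A : ℕ → ℝ) (N : ℕ → ℕ)

lemma sum_mul_exp_mul_sum_div_div_one_add_eq (γ : ℝ) :
    (∑ j ∈ s, A j * exp (-γ / Δ) * ∑ r ∈ Finset.range (N j), (γ / Δ) ^ r / (r ! : ℝ)) / (1 + γ)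
      = ∑ j ∈ s, ∑ r ∈ Finset.range (N j),
          A j / r ! * ((γ / Δ) ^ r * exp (-γ / Δ) / (1 + γ)) := by
  rw [Finset.sum_div]
  refine Finset.sum_congr rfl fun j _ => ?_
  rw [Finset.mul_sum, Finset.sum_div]
  exact Finset.sum_congr rfl fun r _ => by ring

lemma integrableOn_sum_mul_exp_mul_sum_div_div_one_add (hΔ : 0 < Δ) :
    IntegrableOn (fun γ => (∑ j ∈ s, A j * exp (-γ / Δ) *
        ∑ r ∈ Finset.range (N j), (γ / Δ) ^ r / (r ! : ℝ)) / (1 + γ)) (Ioi 0) := by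
  simp only [sum_mul_exp_mul_sum_div_div_one_add_eq s A N]
  exact integrable_finsetSum _ fun j _ => integrable_finsetSum _ fun r _ =>
    (integrableOn_div_pow_mul_exp_neg_div_div_one_add hΔ r).const_mul _

theorem integral_sum_mul_exp_mul_sum_div_div_one_add (hΔ : 0 < Δ) :
    ∫ γ in Ioi 0, (∑ j ∈ s, A j * exp (-γ / Δ) *
        ∑ r ∈ Finset.range (N j), (γ / Δ) ^ r / (r ! : ℝ)) / (1 + γ)
      = exp (1 / Δ) * ∑ j ∈ s, A j *
          ∑ r ∈ Finset.range (N j), (1 / Δ) ^ r * Gammau (-r) (1 / Δ) := by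
  have hterm (r : ℕ) := (integrableOn_div_pow_mul_exp_neg_div_div_one_add hΔ r).const_mul
  simp only [sum_mul_exp_mul_sum_div_div_one_add_eq s A N]
  rw [integral_finsetSum _ fun j _ => integrable_finsetSum _ fun r _ => hterm r _,
    Finset.mul_sum]
  refine Finset.sum_congr rfl fun j _ => ?_
  rw [integral_finsetSum _ fun r _ => hterm r _, Finset.mul_sum, Finset.mul_sum]
  refine Finset.sum_congr rfl fun r _ => ?_
  rw [integral_const_mul, integral_div_pow_mul_exp_neg_div_div_one_add hΔ]
  field_simp [r.factorial_ne_zero]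

end ErlangMixture

open MeasureTheory in
/-- Closed-form average capacity of a κ-μ shadowed channel, case `m < μ` (evaluation of
`C̄_E` in Appendix E, Eq. (E.1)): `(1/ln 2)∫₀^∞ (1−F(γ))/(1+γ) dγ
 = (1/ln 2)(e^{1/Δ₁} Σ_{j=1}^{μ−m} A₁ⱼ Σ_{r=0}^{μ−m−j} (1/Δ₁)^r Γᵤ(−r, 1/Δ₁)
   + e^{1/Δ₂} Σ_{j=1}^{m} A₂ⱼ Σ_{r=0}^{m−j} (1/Δ₂)^r Γᵤ(−r, 1/Δ₂))`. -/
theorem stmt18 (g κ : ℝ) (μ m : ℕ) (hg : 0 < g) (hκ : 0 < κ)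
    (hm : 1 ≤ m) (hmμ : m < μ) :
    ((1 / Real.log 2) * ∫ γ in Set.Ioi (0 : ℝ), (1 - Fcdf1 g κ μ m γ) / (1 + γ)) =
      (1 / Real.log 2) *
        (Real.exp (1 / Δ₁ g κ μ) *
            ∑ j ∈ Finset.Icc 1 (μ - m), A1 κ μ m j *
              ∑ r ∈ Finset.range (μ - m - j + 1),
                (1 / Δ₁ g κ μ) ^ r * Gammau (-(r : ℝ)) (1 / Δ₁ g κ μ)
          + Real.exp (1 / Δ₂ g κ μ m) *
            ∑ j ∈ Finset.Icc 1 m, A2 κ μ m j *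
              ∑ r ∈ Finset.range (m - j + 1),
                (1 / Δ₂ g κ μ m) ^ r * Gammau (-(r : ℝ)) (1 / Δ₂ g κ μ m)) := by
  have hμ : (0 : ℝ) < μ := by exact_mod_cast (show 0 < μ by omega)
  have hm' : (0 : ℝ) < m := by exact_mod_cast hm
  have hΔ₁ : 0 < Δ₁ g κ μ := by unfold Δ₁; positivity
  have hΔ₂ : 0 < Δ₂ g κ μ m := by unfold Δ₂; positivity
  have hsplit : ∀ γ : ℝ, (1 - Fcdf1 g κ μ m γ) / (1 + γ) =
      (∑ j ∈ Finset.Icc 1 (μ - m), A1 κ μ m j * exp (-γ / Δ₁ g κ μ) *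
          ∑ r ∈ Finset.range (μ - m - j + 1), (γ / Δ₁ g κ μ) ^ r / (r ! : ℝ)) / (1 + γ)
        + (∑ j ∈ Finset.Icc 1 m, A2 κ μ m j * exp (-γ / Δ₂ g κ μ m) *
          ∑ r ∈ Finset.range (m - j + 1), (γ / Δ₂ g κ μ m) ^ r / (r ! : ℝ)) / (1 + γ) := by
    intro γ
    rw [← add_div, Fcdf1]
    ring
  simp only [hsplit]
  rw [integral_add (integrableOn_sum_mul_exp_mul_sum_div_div_one_add _ _ _ hΔ₁)
      (integrableOn_sum_mul_exp_mul_sum_div_div_one_add _ _ _ hΔ₂),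
    integral_sum_mul_exp_mul_sum_div_div_one_add _ _ _ hΔ₁,
    integral_sum_mul_exp_mul_sum_div_div_one_add _ _ _ hΔ₂]
end
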